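/- arXiv:2109.15251 — 3 statements merged into one kernel-verified Lean document; each statement's English description precedes it below -/
import Mathlib

section
/- Let Γ be a finite-index subgroup of SL₂(ℤ), k an integer, and g a meromorphic modular form of weight k for Γ that is not identically zero. (i) If τ₀ ∈ ℍ is fixed by some γ ∈ Γ satisfying γ² = −I (an elliptic point of order two), then k is even and the order of vanishing ord_{τ₀}(g) of g at τ₀ (as a meromorphic function on ℍ) satisfies ord_{τ₀}(g) ≡ k/2 (mod 2). (ii) If τ₀ ∈ ℍ is fixed by some γ ∈ Γ whose image in PSL₂(ℤ) has order three (an elliptic point of order three), then ord_{τ₀}(g) ≡ k (mod 3). -/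
open scoped MatrixGroups Real
open Complex Matrix

noncomputable section

/-- The upper half-plane, viewed as a subset of `ℂ`. -/
def UHP : Set ℂ := {z : ℂ | 0 < z.im}

/-- The Möbius action of a matrix in `SL(2, ℤ)` on a point of the upper half-plane. -/
def moebius (γ : SL(2, ℤ)) (τ : ℂ) : ℂ :=
  ((γ.1 0 0 : ℂ) * τ + (γ.1 0 1 : ℂ)) / ((γ.1 1 0 : ℂ) * τ + (γ.1 1 1 : ℂ))

/-- The weight-`k` slash action `(f|ₖγ)(τ) = (cτ+d)^(-k) f(γ·τ)`. -/
def slash (k : ℤ) (γ : SL(2, ℤ)) (f : ℂ → ℂ) : ℂ → ℂ :=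
  fun τ => ((γ.1 1 0 : ℂ) * τ + (γ.1 1 1 : ℂ)) ^ (-k) * f (moebius γ τ)

/-- The translation matrix `T^h = [[1, h], [0, 1]]` as an element of `SL(2, ℤ)`. -/
def Tmat (h : ℕ) : SL(2, ℤ) :=
  ⟨!![1, (h : ℤ); 0, 1], by norm_num [Matrix.det_fin_two_of]⟩

/-- The matrix `-T^h = [[-1, -h], [0, -1]]` as an element of `SL(2, ℤ)`. -/
def negTmat (h : ℕ) : SL(2, ℤ) :=
  ⟨!![-1, -(h : ℤ); 0, -1], by norm_num [Matrix.det_fin_two_of]⟩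

/-- `h` is the least positive integer with `±[[1,h],[0,1]] ∈ γ⁻¹ Γ γ` (the width of the
cusp `γ⁻¹ ∞`). -/
def IsCuspWidth (Γ : Subgroup SL(2, ℤ)) (γ : SL(2, ℤ)) (h : ℕ) : Prop :=
  0 < h ∧ (γ * Tmat h * γ⁻¹ ∈ Γ ∨ γ * negTmat h * γ⁻¹ ∈ Γ) ∧
    ∀ h' : ℕ, 0 < h' → (γ * Tmat h' * γ⁻¹ ∈ Γ ∨ γ * negTmat h' * γ⁻¹ ∈ Γ) → h ≤ h'

/-- A meromorphic modular form of weight `k` for `Γ`: a function meromorphic on the upper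
half-plane, invariant under the weight-`k` slash action of `Γ`, and meromorphic at every
cusp. -/
def IsMeroModular (Γ : Subgroup SL(2, ℤ)) (k : ℤ) (f : ℂ → ℂ) : Prop :=
  MeromorphicOn f UHP ∧
  (∀ γ ∈ Γ, ∀ τ ∈ UHP, f (moebius γ τ) = ((γ.1 1 0 : ℂ) * τ + (γ.1 1 1 : ℂ)) ^ (k : ℤ) * f τ) ∧
  (∀ γ : SL(2, ℤ), ∀ h : ℕ, IsCuspWidth Γ γ h →
    ∃ n : ℤ, ∃ C A : ℝ, ∀ τ ∈ UHP, A ≤ τ.im →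
      ‖Complex.exp (2 * π * I * n * τ / h) * slash k γ f τ‖ ≤ C)

/-- `M k Γ S`: meromorphic modular forms of weight `k` for `Γ` whose poles in the upper
half-plane lie in `S`. -/
def MSp (k : ℤ) (Γ : Subgroup SL(2, ℤ)) (S : Set ℂ) : Set (ℂ → ℂ) :=
  {f | IsMeroModular Γ k f ∧ ∀ τ ∈ UHP, τ ∉ S → AnalyticAt ℂ f τ}

/-- The quasi-modular Eisenstein series `E₂(τ) = 1 - 24 ∑_{n ≥ 1} σ₁(n) e^{2πinτ}`. -/
def E2 : ℂ → ℂ := fun τ =>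
  1 - 24 * ∑' n : ℕ, (∑ d ∈ (n + 1).divisors, (d : ℂ)) * Complex.exp (2 * π * I * (n + 1) * τ)

/-- `QM k Γ S = Σ_r M_{k-2r}(Γ,S)·E₂^r`: meromorphic quasi-modular forms of weight `k`. -/
def QMSp (k : ℤ) (Γ : Subgroup SL(2, ℤ)) (S : Set ℂ) : Set (ℂ → ℂ) :=
  {f | ∃ p : ℕ, ∃ g : ℕ → (ℂ → ℂ), (∀ r : ℕ, r ≤ p → g r ∈ MSp (k - 2 * r) Γ S) ∧
    f = fun τ => ∑ r ∈ Finset.range (p + 1), g r τ * E2 τ ^ r}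

/-- The Serre derivative in weight `k`: `δ(f) = (2πi)⁻¹ f' - (k/12)·E₂·f`. -/
def serre (k : ℤ) (f : ℂ → ℂ) : ℂ → ℂ :=
  fun τ => (2 * π * I)⁻¹ * deriv f τ - ((k : ℂ) / 12) * E2 τ * f τ

/-- A holomorphic cusp form of weight 2 for `Γ`. -/
def IsCuspForm2 (Γ : Subgroup SL(2, ℤ)) (f : ℂ → ℂ) : Prop :=
  DifferentiableOn ℂ f UHP ∧
  (∀ γ ∈ Γ, ∀ τ ∈ UHP, f (moebius γ τ) = ((γ.1 1 0 : ℂ) * τ + (γ.1 1 1 : ℂ)) ^ (2 : ℤ) * f τ) ∧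
  (∀ γ : SL(2, ℤ), ∀ ε : ℝ, 0 < ε → ∃ A : ℝ, ∀ τ ∈ UHP, A ≤ τ.im → ‖slash 2 γ f τ‖ ≤ ε)

/-- `Γ` has genus zero: every holomorphic cusp form of weight 2 for `Γ` vanishes. -/
def HasGenusZero (Γ : Subgroup SL(2, ℤ)) : Prop :=
  ∀ f : ℂ → ℂ, IsCuspForm2 Γ f → ∀ τ ∈ UHP, f τ = 0

/-- `S` is a `Γ`-stable subset of the upper half-plane consisting of finitely many
`Γ`-orbits. -/
def IsFiniteOrbitSet (Γ : Subgroup SL(2, ℤ)) (S : Set ℂ) : Prop :=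
  S ⊆ UHP ∧ (∀ γ ∈ Γ, ∀ τ ∈ S, moebius γ τ ∈ S) ∧
  ∃ T : Finset ℂ, ↑T ⊆ S ∧ ∀ τ ∈ S, ∃ τ₀ ∈ T, ∃ γ ∈ Γ, τ = moebius γ τ₀


section AuxLemmas
open Filter Topology

lemma isOpen_UHP' : IsOpen UHP := isOpen_lt continuous_const Complex.continuous_im

lemma preconnected_UHP' : IsPreconnected UHP := (convex_halfSpace_im_gt 0).isPreconnected

open Filter Topology

lemma ball_ev_aux {z : ℂ} {ε : ℝ} {P : ℂ → Prop}
    (h : ∀ u ∈ Metric.ball z ε, u ≠ z → P u) {w : ℂ} (hw : w ∈ Metric.ball z ε) :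
    ∀ᶠ u in 𝓝[≠] w, P u := by
  have h1 : ∀ᶠ u in 𝓝[≠] w, u ∈ Metric.ball z ε :=
    ((Metric.isOpen_ball.eventually_mem hw)).filter_mono nhdsWithin_le_nhds
  have h2 : ∀ᶠ u in 𝓝[≠] w, u ≠ z := by
    rcases eq_or_ne w z with rfl | hwz
    · exact eventually_mem_nhdsWithin.mono fun u hu => hu
    · exact (eventually_ne_nhds hwz).filter_mono nhdsWithin_le_nhds
  filter_upwards [h1, h2] with u hu1 hu2 using h u hu1 hu2

lemma order_ne_top' {g : ℂ → ℂ} (hm : MeromorphicOn g UHP)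
    (hne : ∃ τ ∈ UHP, AnalyticAt ℂ g τ ∧ g τ ≠ 0)
    {τ₀ : ℂ} (hτ₀ : τ₀ ∈ UHP) : meromorphicOrderAt g τ₀ ≠ ⊤ := by
  intro htop
  rw [meromorphicOrderAt_eq_top_iff] at htop
  obtain ⟨τ₁, hτ₁, han, hgn⟩ := hne
  set E : Set ℂ := {z | z ∈ UHP ∧ ∀ᶠ w in 𝓝[≠] z, g w = 0} with hE
  set F : Set ℂ := {z | z ∈ UHP ∧ ∀ᶠ w in 𝓝[≠] z, g w ≠ 0} with hF
  have hEopen : IsOpen E := by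
    rw [isOpen_iff_mem_nhds]
    rintro z ⟨hzU, hzE⟩
    have h1 : ∀ᶠ w in 𝓝 z, (w ≠ z → g w = 0) ∧ w ∈ UHP := by
      refine (eventually_nhdsWithin_iff.mp hzE).and (isOpen_UHP'.eventually_mem hzU) |>.mono ?_
      intro w hw
      exact ⟨fun h => hw.1 h, hw.2⟩
    obtain ⟨ε, hε, hball⟩ := Metric.eventually_nhds_iff_ball.mp h1
    refine Filter.mem_of_superset (Metric.ball_mem_nhds z hε) ?_
    intro w hw
    exact ⟨(hball w hw).2, ball_ev_aux (fun u hu hun => (hball u hu).1 hun) hw⟩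
  have hFopen : IsOpen F := by
    rw [isOpen_iff_mem_nhds]
    rintro z ⟨hzU, hzF⟩
    have h1 : ∀ᶠ w in 𝓝 z, (w ≠ z → g w ≠ 0) ∧ w ∈ UHP := by
      refine (eventually_nhdsWithin_iff.mp hzF).and (isOpen_UHP'.eventually_mem hzU) |>.mono ?_
      intro w hw
      exact ⟨fun h => hw.1 h, hw.2⟩
    obtain ⟨ε, hε, hball⟩ := Metric.eventually_nhds_iff_ball.mp h1
    refine Filter.mem_of_superset (Metric.ball_mem_nhds z hε) ?_
    intro w hw
    exact ⟨(hball w hw).2, ball_ev_aux (fun u hu hun => (hball u hu).1 hun) hw⟩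
  have hcover : UHP ⊆ E ∪ F := by
    intro z hz
    rcases eq_or_ne (meromorphicOrderAt g z) ⊤ with ho | ho
    · exact Or.inl ⟨hz, meromorphicOrderAt_eq_top_iff.mp ho⟩
    · obtain ⟨n, hn⟩ := WithTop.ne_top_iff_exists.mp ho
      obtain ⟨h, h_an, h_ne, h_eq⟩ := (meromorphicOrderAt_eq_int_iff (hm z hz) (n := n)).mp hn.symm
      refine Or.inr ⟨hz, ?_⟩
      have hev : ∀ᶠ w in 𝓝[≠] z, h w ≠ 0 :=
        (h_an.continuousAt.eventually_ne h_ne).filter_mono nhdsWithin_le_nhds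
      filter_upwards [h_eq, hev, eventually_mem_nhdsWithin] with w hw1 hw2 hw3
      rw [hw1, smul_eq_mul]
      exact mul_ne_zero (zpow_ne_zero _ (sub_ne_zero.mpr hw3)) hw2
  have hne₀ : (UHP ∩ E).Nonempty := ⟨τ₀, hτ₀, hτ₀, htop⟩
  have hne₁ : (UHP ∩ F).Nonempty :=
    ⟨τ₁, hτ₁, hτ₁, (han.continuousAt.eventually_ne hgn).filter_mono nhdsWithin_le_nhds⟩
  obtain ⟨z, _, hzE, hzF⟩ := preconnected_UHP' E F hEopen hFopen hcover hne₀ hne₁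
  obtain ⟨u, hu0, hu1⟩ := (hzE.2.and hzF.2).exists
  exact hu1 hu0

lemma eig_aux' {a b c d τ₀ : ℂ} (him : 0 < τ₀.im) (hfix : (a * τ₀ + b) / (c * τ₀ + d) = τ₀) :
    c * τ₀ + d ≠ 0 ∧ a * τ₀ + b = (c * τ₀ + d) * τ₀ := by
  have hτne : τ₀ ≠ 0 := by
    intro h; rw [h] at him; simp at him
  have hμ : c * τ₀ + d ≠ 0 := by
    intro h; rw [h, div_zero] at hfix; exact hτne hfix.symm
  rw [div_eq_iff hμ] at hfix
  exact ⟨hμ, by linear_combination hfix⟩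

lemma mu_zpow_eq_one' {k : ℤ} {g : ℂ → ℂ} {a b c d τ₀ : ℂ} (hτ₀ : τ₀ ∈ UHP)
    (hdet : a * d - b * c = 1)
    (hfix : (a * τ₀ + b) / (c * τ₀ + d) = τ₀)
    (hmero : MeromorphicOn g UHP)
    (hmod : ∀ τ ∈ UHP, g ((a * τ + b) / (c * τ + d)) = (c * τ + d) ^ (k : ℤ) * g τ)
    {m : ℤ} (hord : meromorphicOrderAt g τ₀ = (m : WithTop ℤ)) :
    (c * τ₀ + d) ^ (2 * m + k) = 1 := by
  have him : 0 < τ₀.im := hτ₀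
  obtain ⟨hμ, heig⟩ := eig_aux' him hfix
  obtain ⟨h, h_an, h_ne, h_eq⟩ := (meromorphicOrderAt_eq_int_iff (hmero τ₀ hτ₀) (n := m)).mp hord
  have hUev : ∀ᶠ τ in 𝓝 τ₀, τ ∈ UHP := isOpen_UHP'.eventually_mem hτ₀
  have hcdC : ContinuousAt (fun τ : ℂ => c * τ + d) τ₀ := by fun_prop
  have hcdev : ∀ᶠ τ in 𝓝 τ₀, c * τ + d ≠ 0 := hcdC.eventually_ne hμ
  have hmoeC : ContinuousAt (fun τ : ℂ => (a * τ + b) / (c * τ + d)) τ₀ :=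
    ContinuousAt.div (by fun_prop) (by fun_prop) hμ
  have htend : Tendsto (fun τ : ℂ => (a * τ + b) / (c * τ + d)) (𝓝 τ₀) (𝓝 τ₀) := by
    have := hmoeC.tendsto
    rwa [hfix] at this
  have h_eq' : ∀ᶠ w in 𝓝 τ₀, w ≠ τ₀ → g w = (w - τ₀) ^ m * h w := by
    have := eventually_nhdsWithin_iff.mp h_eq
    filter_upwards [this] with w hw hwne
    simpa [smul_eq_mul] using hw hwne
  have hcomp := htend.eventually h_eq'
  have hKey : ∀ᶠ τ in 𝓝[≠] τ₀,
      ((c * τ + d) ^ m)⁻¹ * ((c * τ₀ + d) ^ m)⁻¹ * h ((a * τ + b) / (c * τ + d))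
        = (c * τ + d) ^ k * h τ := by
    filter_upwards [hUev.filter_mono nhdsWithin_le_nhds, hcdev.filter_mono nhdsWithin_le_nhds,
      hcomp.filter_mono nhdsWithin_le_nhds, h_eq, eventually_mem_nhdsWithin]
      with τ hU hcd hgm hgτ hτne'
    have hne2 : τ ≠ τ₀ := hτne'
    have hsub : τ - τ₀ ≠ 0 := sub_ne_zero.mpr hne2
    have hmoe : (a * τ + b) / (c * τ + d) - τ₀ = (τ - τ₀) * ((c * τ + d) * (c * τ₀ + d))⁻¹ := by
      rw [eq_mul_inv_iff_mul_eq₀ (mul_ne_zero hcd hμ)]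
      have hq : (a * τ + b) / (c * τ + d) * ((c * τ + d) * (c * τ₀ + d))
          = (a * τ + b) * (c * τ₀ + d) := by
        rw [div_mul_eq_mul_div, div_eq_iff hcd]
        ring
      rw [sub_mul, hq]
      linear_combination (τ - τ₀) * hdet + (c * τ + d) * heig
    have hmne : (a * τ + b) / (c * τ + d) ≠ τ₀ := by
      rw [← sub_ne_zero, hmoe]
      exact mul_ne_zero hsub (inv_ne_zero (mul_ne_zero hcd hμ))
    have E1 := hgm hmne
    have E2 := hmod τ hU
    have E3 : g τ = (τ - τ₀) ^ m * h τ := by simpa [smul_eq_mul] using hgτ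
    have E4 : ((τ - τ₀) * ((c * τ + d) * (c * τ₀ + d))⁻¹) ^ m
        * h ((a * τ + b) / (c * τ + d))
        = (c * τ + d) ^ k * ((τ - τ₀) ^ m * h τ) := by
      rw [← hmoe, ← E1, E2, E3]
    apply mul_left_cancel₀ (zpow_ne_zero m hsub)
    calc (τ - τ₀) ^ m * (((c * τ + d) ^ m)⁻¹ * ((c * τ₀ + d) ^ m)⁻¹
            * h ((a * τ + b) / (c * τ + d)))
        = ((τ - τ₀) * ((c * τ + d) * (c * τ₀ + d))⁻¹) ^ m
            * h ((a * τ + b) / (c * τ + d)) := by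
          rw [mul_zpow, _root_.inv_zpow, mul_zpow]
          ring
      _ = (c * τ + d) ^ k * ((τ - τ₀) ^ m * h τ) := E4
      _ = (τ - τ₀) ^ m * ((c * τ + d) ^ k * h τ) := by ring
  have hΦ : Tendsto (fun τ => ((c * τ + d) ^ m)⁻¹ * ((c * τ₀ + d) ^ m)⁻¹
      * h ((a * τ + b) / (c * τ + d))) (𝓝[≠] τ₀)
      (𝓝 (((c * τ₀ + d) ^ m)⁻¹ * ((c * τ₀ + d) ^ m)⁻¹ * h τ₀)) := by
    apply Tendsto.mono_left _ nhdsWithin_le_nhds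
    have c1 : ContinuousAt (fun τ : ℂ => ((c * τ + d) ^ m)⁻¹) τ₀ :=
      (hcdC.zpow₀ m (Or.inl hμ)).inv₀ (zpow_ne_zero _ hμ)
    have c2 : ContinuousAt (fun τ : ℂ => h ((a * τ + b) / (c * τ + d))) τ₀ := by
      have hh : ContinuousAt h τ₀ := h_an.continuousAt
      exact hh.comp_of_eq hmoeC hfix
    have claim : ContinuousAt (fun τ : ℂ => ((c * τ + d) ^ m)⁻¹ * ((c * τ₀ + d) ^ m)⁻¹
        * h ((a * τ + b) / (c * τ + d))) τ₀ := (c1.mul continuousAt_const).mul c2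
    have := claim.tendsto
    simpa [hfix] using this
  have hΨ : Tendsto (fun τ => (c * τ + d) ^ k * h τ) (𝓝[≠] τ₀)
      (𝓝 ((c * τ₀ + d) ^ k * h τ₀)) := by
    apply Tendsto.mono_left _ nhdsWithin_le_nhds
    exact ((hcdC.zpow₀ k (Or.inl hμ)).mul h_an.continuousAt).tendsto
  have hlim : ((c * τ₀ + d) ^ m)⁻¹ * ((c * τ₀ + d) ^ m)⁻¹ * h τ₀
      = (c * τ₀ + d) ^ k * h τ₀ :=
    tendsto_nhds_unique (hΦ.congr' hKey) hΨ
  have hc : ((c * τ₀ + d) ^ m)⁻¹ * ((c * τ₀ + d) ^ m)⁻¹ = (c * τ₀ + d) ^ k :=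
    mul_right_cancel₀ h_ne hlim
  have hzm : (c * τ₀ + d) ^ m ≠ 0 := zpow_ne_zero _ hμ
  have expand : (c * τ₀ + d) ^ (2 * m + k)
      = ((c * τ₀ + d) ^ m * (c * τ₀ + d) ^ m) * (c * τ₀ + d) ^ k := by
    rw [zpow_add₀ hμ, two_mul, zpow_add₀ hμ]
  rw [expand, ← hc]
  field_simp

lemma zpow_emod_eq_one' {μ : ℂ} (hμ : μ ≠ 0) {n : ℤ} (h1 : μ ^ n = 1)
    {N : ℤ} (hN : μ ^ N = 1) : μ ^ (N % n) = 1 := by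
  calc μ ^ (N % n) = (μ ^ n) ^ (N / n) * μ ^ (N % n) := by
        rw [h1, _root_.one_zpow, one_mul]
    _ = μ ^ (n * (N / n) + N % n) := by rw [zpow_add₀ hμ, _root_.zpow_mul]
    _ = μ ^ N := by rw [Int.mul_ediv_add_emod]
    _ = 1 := hN

lemma four_dvd' {μ : ℂ} (hsq : μ ^ (2 : ℕ) = -1) {N : ℤ} (hN : μ ^ N = 1) :
    N % 4 = 0 := by
  have hμ : μ ≠ 0 := by
    intro h; rw [h] at hsq; norm_num at hsq
  have h4 : μ ^ (4 : ℤ) = 1 := by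
    rw [show (4 : ℤ) = ((4 : ℕ) : ℤ) by norm_num, zpow_natCast]
    calc μ ^ (4 : ℕ) = (μ ^ (2 : ℕ)) ^ (2 : ℕ) := by ring
      _ = 1 := by rw [hsq]; ring
  have hr := zpow_emod_eq_one' hμ h4 hN
  rcases (by omega : N % 4 = 0 ∨ N % 4 = 1 ∨ N % 4 = 2 ∨ N % 4 = 3) with h | h | h | h
  · exact h
  · rw [h, zpow_one] at hr
    rw [hr] at hsq; norm_num at hsq
  · rw [h, show (2 : ℤ) = ((2 : ℕ) : ℤ) by norm_num, zpow_natCast] at hr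
    rw [hr] at hsq; norm_num at hsq
  · exfalso
    rw [h, show (3 : ℤ) = ((3 : ℕ) : ℤ) by norm_num, zpow_natCast] at hr
    have h4' : μ ^ (4 : ℕ) = 1 := by
      rw [show (μ ^ (4 : ℕ)) = μ ^ ((4 : ℕ) : ℤ) from (zpow_natCast μ 4).symm]
      exact_mod_cast h4
    have hone : μ = 1 := by
      have := h4'
      rw [pow_succ, hr, one_mul] at this
      exact this
    rw [hone] at hsq; norm_num at hsq

lemma three_dvd' {μ : ℂ} (hc : μ ^ (3 : ℕ) = 1 ∨ μ ^ (3 : ℕ) = -1)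
    (h1 : μ ≠ 1) (h2 : μ ≠ -1) {N : ℤ} (hN : μ ^ N = 1) :
    N % 6 = 0 ∨ N % 6 = 3 := by
  have hμ : μ ≠ 0 := by
    intro h; rcases hc with hc | hc <;> rw [h] at hc <;> norm_num at hc
  have hsqne : μ ^ (2 : ℕ) ≠ 1 ∧ μ ^ (2 : ℕ) ≠ -1 := by
    constructor <;> intro h <;> rcases hc with hc | hc
    · apply h1
      have : μ ^ (2 : ℕ) * μ = 1 := by rw [← pow_succ]; exact hc
      rw [h, one_mul] at this; exact this
    · apply h2
      have : μ ^ (2 : ℕ) * μ = -1 := by rw [← pow_succ]; exact hc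
      rw [h, one_mul] at this; exact this
    · apply h2
      have : μ ^ (2 : ℕ) * μ = 1 := by rw [← pow_succ]; exact hc
      rw [h] at this
      linear_combination -this
    · apply h1
      have : μ ^ (2 : ℕ) * μ = -1 := by rw [← pow_succ]; exact hc
      rw [h] at this
      linear_combination -this
  have h6 : μ ^ (6 : ℤ) = 1 := by
    rw [show (6 : ℤ) = ((6 : ℕ) : ℤ) by norm_num, zpow_natCast]
    have h62 : μ ^ (6 : ℕ) = (μ ^ (3 : ℕ)) ^ (2 : ℕ) := by ring
    rcases hc with hc | hc <;> rw [h62, hc] <;> ring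
  have hr := zpow_emod_eq_one' hμ h6 hN
  have hnat : ∀ j : ℕ, N % 6 = (j : ℤ) → μ ^ j = 1 := by
    intro j hj
    rw [hj, zpow_natCast] at hr
    exact hr
  rcases (by omega : N % 6 = 0 ∨ N % 6 = 1 ∨ N % 6 = 2 ∨ N % 6 = 3 ∨ N % 6 = 4 ∨ N % 6 = 5)
    with h | h | h | h | h | h
  · exact Or.inl h
  · exact absurd (by simpa using hnat 1 (by exact_mod_cast h)) h1
  · exact absurd (hnat 2 (by exact_mod_cast h)) hsqne.1
  · exact Or.inr h
  · exfalso
    have h4 : μ ^ (4 : ℕ) = 1 := hnat 4 (by exact_mod_cast h)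
    have hfac : (μ ^ (2 : ℕ) - 1) * (μ ^ (2 : ℕ) + 1) = 0 := by linear_combination h4
    rcases mul_eq_zero.mp hfac with h' | h'
    · exact hsqne.1 (by linear_combination h')
    · exact hsqne.2 (by linear_combination h')
  · exfalso
    have h5 : μ ^ (5 : ℕ) = 1 := hnat 5 (by exact_mod_cast h)
    have h6' : μ ^ (6 : ℕ) = 1 := by
      have := h6
      rw [show (6 : ℤ) = ((6 : ℕ) : ℤ) by norm_num, zpow_natCast] at this
      exact this
    apply h1
    have : μ ^ (5 : ℕ) * μ = 1 := by rw [← pow_succ]; exact h6'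
    rw [h5, one_mul] at this
    exact this

lemma mu_sq' (γ : SL(2, ℤ)) {τ₀ : ℂ} (him : 0 < τ₀.im)
    (hfix : moebius γ τ₀ = τ₀) (hsq : γ.1 ^ 2 = -1) :
    ((γ.1 1 0 : ℂ) * τ₀ + (γ.1 1 1 : ℂ)) ^ (2 : ℕ) = -1 := by
  obtain ⟨hμ, heig⟩ := eig_aux' him hfix
  have i10 : γ.1 1 0 * γ.1 0 0 + γ.1 1 1 * γ.1 1 0 = 0 := by
    have := congrFun (congrFun hsq 1) 0
    simp only [pow_two, Matrix.mul_apply, Fin.sum_univ_two, Matrix.neg_apply,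
      Matrix.one_apply_ne (by decide : (1 : Fin 2) ≠ 0), neg_zero] at this
    linear_combination this
  have i11 : γ.1 1 0 * γ.1 0 1 + γ.1 1 1 * γ.1 1 1 = -1 := by
    have := congrFun (congrFun hsq 1) 1
    simp only [pow_two, Matrix.mul_apply, Fin.sum_univ_two, Matrix.neg_apply,
      Matrix.one_apply_eq] at this
    linear_combination this
  have E10 : (γ.1 1 0 : ℂ) * (γ.1 0 0 : ℂ) + (γ.1 1 1 : ℂ) * (γ.1 1 0 : ℂ) = 0 := by
    exact_mod_cast i10
  have E11 : (γ.1 1 0 : ℂ) * (γ.1 0 1 : ℂ) + (γ.1 1 1 : ℂ) * (γ.1 1 1 : ℂ) = -1 := by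
    exact_mod_cast i11
  linear_combination -(γ.1 1 0 : ℂ) * heig + τ₀ * E10 + E11

lemma mu_cube' (γ : SL(2, ℤ)) {τ₀ : ℂ} (him : 0 < τ₀.im)
    (hfix : moebius γ τ₀ = τ₀) (hc : γ.1 ^ 3 = 1 ∨ γ.1 ^ 3 = -1) :
    ((γ.1 1 0 : ℂ) * τ₀ + (γ.1 1 1 : ℂ)) ^ (3 : ℕ) = 1 ∨
      ((γ.1 1 0 : ℂ) * τ₀ + (γ.1 1 1 : ℂ)) ^ (3 : ℕ) = -1 := by
  obtain ⟨hμ, heig⟩ := eig_aux' him hfix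
  have key : ∀ e : ℤ, (γ.1 1 0 * γ.1 0 0 + γ.1 1 1 * γ.1 1 0) * γ.1 0 0
        + (γ.1 1 0 * γ.1 0 1 + γ.1 1 1 * γ.1 1 1) * γ.1 1 0 = 0 →
      (γ.1 1 0 * γ.1 0 0 + γ.1 1 1 * γ.1 1 0) * γ.1 0 1
        + (γ.1 1 0 * γ.1 0 1 + γ.1 1 1 * γ.1 1 1) * γ.1 1 1 = e →
      ((γ.1 1 0 : ℂ) * τ₀ + (γ.1 1 1 : ℂ)) ^ (3 : ℕ) = (e : ℂ) := by
    intro e i10 i11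
    have E10 : ((γ.1 1 0 : ℂ) * (γ.1 0 0 : ℂ) + (γ.1 1 1 : ℂ) * (γ.1 1 0 : ℂ)) * (γ.1 0 0 : ℂ)
        + ((γ.1 1 0 : ℂ) * (γ.1 0 1 : ℂ) + (γ.1 1 1 : ℂ) * (γ.1 1 1 : ℂ)) * (γ.1 1 0 : ℂ)
        = 0 := by exact_mod_cast i10
    have E11 : ((γ.1 1 0 : ℂ) * (γ.1 0 0 : ℂ) + (γ.1 1 1 : ℂ) * (γ.1 1 0 : ℂ)) * (γ.1 0 1 : ℂ)
        + ((γ.1 1 0 : ℂ) * (γ.1 0 1 : ℂ) + (γ.1 1 1 : ℂ) * (γ.1 1 1 : ℂ)) * (γ.1 1 1 : ℂ)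
        = (e : ℂ) := by exact_mod_cast i11
    linear_combination
      (-(((γ.1 1 0 : ℂ) * (γ.1 0 0 : ℂ) + (γ.1 1 1 : ℂ) * (γ.1 1 0 : ℂ))
        + (γ.1 1 0 : ℂ) * ((γ.1 1 0 : ℂ) * τ₀ + (γ.1 1 1 : ℂ)))) * heig + τ₀ * E10 + E11
  rcases hc with h3 | h3
  · left
    refine (key 1 ?_ ?_).trans (by norm_num)
    · have := congrFun (congrFun h3 1) 0
      simp only [pow_succ, pow_zero, Matrix.one_mul, Matrix.mul_apply, Fin.sum_univ_two,
        Matrix.one_apply_ne (by decide : (1 : Fin 2) ≠ 0)] at this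
      linear_combination this
    · have := congrFun (congrFun h3 1) 1
      simp only [pow_succ, pow_zero, Matrix.one_mul, Matrix.mul_apply, Fin.sum_univ_two,
        Matrix.one_apply_eq] at this
      linear_combination this
  · right
    refine (key (-1) ?_ ?_).trans (by norm_num)
    · have := congrFun (congrFun h3 1) 0
      simp only [pow_succ, pow_zero, Matrix.one_mul, Matrix.mul_apply, Fin.sum_univ_two,
        Matrix.neg_apply, Matrix.one_apply_ne (by decide : (1 : Fin 2) ≠ 0), neg_zero] at this
      linear_combination this
    · have := congrFun (congrFun h3 1) 1
      simp only [pow_succ, pow_zero, Matrix.one_mul, Matrix.mul_apply, Fin.sum_univ_two,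
        Matrix.neg_apply, Matrix.one_apply_eq] at this
      linear_combination this

lemma int_combo' {p q : ℤ} {τ₀ : ℂ} (him : 0 < τ₀.im) (h : (p : ℂ) * τ₀ + q = 0) :
    p = 0 ∧ q = 0 := by
  have h1 := congrArg Complex.im h
  simp only [Complex.add_im, Complex.mul_im, Complex.intCast_im, Complex.intCast_re,
    Complex.zero_im, zero_mul, mul_zero, add_zero, zero_add] at h1
  have hp : (p : ℝ) = 0 := by
    rcases mul_eq_zero.mp h1 with h' | h'
    · exact h'
    · exact absurd h' him.ne'
  have hp0 : p = 0 := by exact_mod_cast hp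
  subst hp0
  simp only [Int.cast_zero, zero_mul, zero_add] at h
  exact ⟨rfl, by exact_mod_cast h⟩

lemma mu_ne' (γ : SL(2, ℤ)) {τ₀ : ℂ} (him : 0 < τ₀.im) (hfix : moebius γ τ₀ = τ₀)
    (hne1 : γ.1 ≠ 1) (hnem1 : γ.1 ≠ -1) {u : ℤ} (hu : u = 1 ∨ u = -1)
    (he : (γ.1 1 0 : ℂ) * τ₀ + (γ.1 1 1 : ℂ) = (u : ℂ)) : False := by
  obtain ⟨hμ, heig⟩ := eig_aux' him hfix
  have h1 : ((γ.1 1 0 : ℤ) : ℂ) * τ₀ + ((γ.1 1 1 - u : ℤ) : ℂ) = 0 := by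
    push_cast
    linear_combination he
  obtain ⟨hc0, hd⟩ := int_combo' him h1
  have hdu : γ.1 1 1 = u := by omega
  have h2 : ((γ.1 0 0 - u : ℤ) : ℂ) * τ₀ + ((γ.1 0 1 : ℤ) : ℂ) = 0 := by
    push_cast
    linear_combination heig + τ₀ * he
  obtain ⟨ha, hb⟩ := int_combo' him h2
  have hau : γ.1 0 0 = u := by omega
  have hmat : γ.1 = !![u, 0; 0, u] := by
    rw [Matrix.eta_fin_two γ.1, hau, hb, hc0, hdu]
  rcases hu with rfl | rfl
  · exact hne1 (by rw [hmat, Matrix.one_fin_two])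
  · apply hnem1
    rw [hmat]
    rw [show (-1 : Matrix (Fin 2) (Fin 2) ℤ) = -(1 : Matrix (Fin 2) (Fin 2) ℤ) from rfl,
      Matrix.one_fin_two]
    norm_num

end AuxLemmas

/-- Vanishing orders of a nonzero meromorphic modular form of weight `k` at elliptic points:
(i) at an elliptic point of order two (fixed by some `γ ∈ Γ` with `γ² = -I`), `k` is even
and the order is congruent to `k/2` modulo `2`; (ii) at an elliptic point of order three
(fixed by some `γ ∈ Γ` whose image in `PSL₂(ℤ)` has order three), the order is congruent
to `k` modulo `3`. -/
theorem order_congruence_at_elliptic_points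
    (Γ : Subgroup SL(2, ℤ)) [Subgroup.FiniteIndex Γ] (k : ℤ)
    (g : ℂ → ℂ) (hg : IsMeroModular Γ k g)
    (hne : ∃ τ ∈ UHP, AnalyticAt ℂ g τ ∧ g τ ≠ 0) :
    (∀ τ₀ : ℂ, ∀ hτ₀ : τ₀ ∈ UHP, ∀ γ ∈ Γ, γ.1 ^ 2 = -1 → moebius γ τ₀ = τ₀ →
      Even k ∧ ∃ m : ℤ, meromorphicOrderAt g τ₀ = (m : WithTop ℤ) ∧ m % 2 = (k / 2) % 2) ∧
    (∀ τ₀ : ℂ, ∀ hτ₀ : τ₀ ∈ UHP, ∀ γ ∈ Γ,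
      (γ.1 ^ 3 = 1 ∨ γ.1 ^ 3 = -1) → γ.1 ≠ 1 → γ.1 ≠ -1 → moebius γ τ₀ = τ₀ →
      ∃ m : ℤ, meromorphicOrderAt g τ₀ = (m : WithTop ℤ) ∧ m % 3 = k % 3) := by
  have hmero : MeromorphicOn g UHP := hg.1
  constructor
  · intro τ₀ hτ₀ γ hγ hsq hfix
    have him : 0 < τ₀.im := hτ₀
    obtain ⟨m, hm⟩ := WithTop.ne_top_iff_exists.mp (order_ne_top' hg.1 hne hτ₀)
    have hdet : (γ.1 0 0 : ℂ) * (γ.1 1 1 : ℂ) - (γ.1 0 1 : ℂ) * (γ.1 1 0 : ℂ) = 1 := by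
      have hd := γ.2
      rw [Matrix.det_fin_two] at hd
      exact_mod_cast hd
    have hfix' : ((γ.1 0 0 : ℂ) * τ₀ + (γ.1 0 1 : ℂ))
        / ((γ.1 1 0 : ℂ) * τ₀ + (γ.1 1 1 : ℂ)) = τ₀ := hfix
    have hmod : ∀ τ ∈ UHP, g (((γ.1 0 0 : ℂ) * τ + (γ.1 0 1 : ℂ))
        / ((γ.1 1 0 : ℂ) * τ + (γ.1 1 1 : ℂ)))
        = ((γ.1 1 0 : ℂ) * τ + (γ.1 1 1 : ℂ)) ^ (k : ℤ) * g τ := hg.2.1 γ hγ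
    have hmu := mu_zpow_eq_one' hτ₀ hdet hfix' hg.1 hmod hm.symm
    have hsqC := mu_sq' γ him hfix hsq
    have h4 := four_dvd' hsqC hmu
    refine ⟨?_, m, hm.symm, ?_⟩
    · rw [Int.even_iff]; omega
    · omega
  · intro τ₀ hτ₀ γ hγ hcube hne1 hnem1 hfix
    have him : 0 < τ₀.im := hτ₀
    obtain ⟨m, hm⟩ := WithTop.ne_top_iff_exists.mp (order_ne_top' hg.1 hne hτ₀)
    have hdet : (γ.1 0 0 : ℂ) * (γ.1 1 1 : ℂ) - (γ.1 0 1 : ℂ) * (γ.1 1 0 : ℂ) = 1 := by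
      have hd := γ.2
      rw [Matrix.det_fin_two] at hd
      exact_mod_cast hd
    have hfix' : ((γ.1 0 0 : ℂ) * τ₀ + (γ.1 0 1 : ℂ))
        / ((γ.1 1 0 : ℂ) * τ₀ + (γ.1 1 1 : ℂ)) = τ₀ := hfix
    have hmod : ∀ τ ∈ UHP, g (((γ.1 0 0 : ℂ) * τ + (γ.1 0 1 : ℂ))
        / ((γ.1 1 0 : ℂ) * τ + (γ.1 1 1 : ℂ)))
        = ((γ.1 1 0 : ℂ) * τ + (γ.1 1 1 : ℂ)) ^ (k : ℤ) * g τ := hg.2.1 γ hγ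
    have hmu := mu_zpow_eq_one' hτ₀ hdet hfix' hg.1 hmod hm.symm
    have hcC := mu_cube' γ him hfix hcube
    have hne1' : (γ.1 1 0 : ℂ) * τ₀ + (γ.1 1 1 : ℂ) ≠ 1 := by
      intro h
      exact mu_ne' γ him hfix hne1 hnem1 (Or.inl rfl) (by rw [h]; norm_num)
    have hnem1' : (γ.1 1 0 : ℂ) * τ₀ + (γ.1 1 1 : ℂ) ≠ -1 := by
      intro h
      exact mu_ne' γ him hfix hne1 hnem1 (Or.inr rfl) (by rw [h]; norm_num)
    have h36 := three_dvd' hcC hne1' hnem1' hmu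
    rcases h36 with h | h <;> exact ⟨m, hm.symm, by omega⟩

end
end

section
/- The subgroup of SL₂(ℤ) generated by the three matrices [[1,1],[0,1]], [[1,0],[−6,1]] and [[7,2],[−18,−5]] is equal to the congruence subgroup Γ₁(6). (These matrices are the monodromy matrices of the two-loop equal-mass sunrise differential operator around its singular points t = 0, 1, 9, expressed in a suitable basis; hence the monodromy group of the sunrise operator is Γ₁(6).) -/
open scoped MatrixGroups
open Matrix

/-- The monodromy matrix of the sunrise operator around `t = 0`. -/
def sunMonodromy0 : SL(2, ℤ) :=
  ⟨!![1, 1; 0, 1], by norm_num [Matrix.det_fin_two_of]⟩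

/-- The monodromy matrix of the sunrise operator around `t = 1`. -/
def sunMonodromy1 : SL(2, ℤ) :=
  ⟨!![1, 0; -6, 1], by norm_num [Matrix.det_fin_two_of]⟩

/-- The monodromy matrix of the sunrise operator around `t = 9`. -/
def sunMonodromy9 : SL(2, ℤ) :=
  ⟨!![7, 2; -18, -5], by norm_num [Matrix.det_fin_two_of]⟩

namespace SunriseAux

private abbrev A := sunMonodromy0
private abbrev B := sunMonodromy1
private abbrev C := sunMonodromy9

/-- The subgroup generated by the monodromy matrices. -/
private abbrev H : Subgroup SL(2, ℤ) :=
  Subgroup.closure {sunMonodromy0, sunMonodromy1, sunMonodromy9}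

lemma A_mem : A ∈ H := Subgroup.subset_closure (by simp)
lemma B_mem : B ∈ H := Subgroup.subset_closure (by simp)
lemma C_mem : C ∈ H := Subgroup.subset_closure (by simp)

/-- Auxiliary parabolic elements fixing the cusps `1/2`, `1/3`, `-1/2`. -/
def E : SL(2, ℤ) := ⟨!![7, -3; 12, -5], by norm_num [Matrix.det_fin_two_of]⟩
def F : SL(2, ℤ) := ⟨!![7, -2; 18, -5], by norm_num [Matrix.det_fin_two_of]⟩
def D : SL(2, ℤ) := ⟨!![7, 3; -12, -5], by norm_num [Matrix.det_fin_two_of]⟩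
/-- Explicit inverses of the six basic matrices. -/
def Ai : SL(2, ℤ) := ⟨!![1, -1; 0, 1], by norm_num [Matrix.det_fin_two_of]⟩
def Bi : SL(2, ℤ) := ⟨!![1, 0; 6, 1], by norm_num [Matrix.det_fin_two_of]⟩
def Ci : SL(2, ℤ) := ⟨!![-5, -2; 18, 7], by norm_num [Matrix.det_fin_two_of]⟩
def Di : SL(2, ℤ) := ⟨!![-5, -3; 12, 7], by norm_num [Matrix.det_fin_two_of]⟩
def Ei : SL(2, ℤ) := ⟨!![-5, 3; -12, 7], by norm_num [Matrix.det_fin_two_of]⟩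
def Fi : SL(2, ℤ) := ⟨!![-5, 2; -18, 7], by norm_num [Matrix.det_fin_two_of]⟩

lemma E_mem : E ∈ H := by
  have h : A * C * B = E := by
    ext i j; fin_cases i <;> fin_cases j <;> simp only [Matrix.SpecialLinearGroup.coe_mul] <;>
      simp [sunMonodromy0, sunMonodromy1, sunMonodromy9, E,
        Matrix.mul_apply, Fin.sum_univ_succ]
  exact h ▸ mul_mem (mul_mem A_mem C_mem) B_mem

lemma F_mem : F ∈ H := by
  have h : C * B * F = B := by
    ext i j; fin_cases i <;> fin_cases j <;> simp only [Matrix.SpecialLinearGroup.coe_mul] <;>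
      simp [sunMonodromy1, sunMonodromy9, F, Matrix.mul_apply, Fin.sum_univ_succ]
  have hF : F = (C * B)⁻¹ * B := by
    have h2 : F = (C * B)⁻¹ * (C * B * F) := (inv_mul_cancel_left _ _).symm
    rwa [h] at h2
  rw [hF]
  exact mul_mem (inv_mem (mul_mem C_mem B_mem)) B_mem

lemma D_mem : D ∈ H := by
  have h : C * B * A * D = 1 := by
    ext i j; fin_cases i <;> fin_cases j <;> simp only [Matrix.SpecialLinearGroup.coe_mul] <;>
      simp [sunMonodromy0, sunMonodromy1, sunMonodromy9, D,
        Matrix.mul_apply, Fin.sum_univ_succ]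
  have hD : D = (C * B * A)⁻¹ := eq_inv_of_mul_eq_one_right h
  rw [hD]
  exact inv_mem (mul_mem (mul_mem C_mem B_mem) A_mem)

lemma inv_mem_of_mul_eq_one {M N : SL(2, ℤ)} (hM : M ∈ H) (h : M * N = 1) : N ∈ H := by
  have hN : N = M⁻¹ := eq_inv_of_mul_eq_one_right h
  exact hN ▸ inv_mem hM

lemma Ai_mem : Ai ∈ H :=
  inv_mem_of_mul_eq_one A_mem (by
    ext i j; fin_cases i <;> fin_cases j <;> simp only [Matrix.SpecialLinearGroup.coe_mul] <;>
      simp [sunMonodromy0, Ai, Matrix.mul_apply, Fin.sum_univ_succ])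

lemma Bi_mem : Bi ∈ H :=
  inv_mem_of_mul_eq_one B_mem (by
    ext i j; fin_cases i <;> fin_cases j <;> simp only [Matrix.SpecialLinearGroup.coe_mul] <;>
      simp [sunMonodromy1, Bi, Matrix.mul_apply, Fin.sum_univ_succ])

lemma Ci_mem : Ci ∈ H :=
  inv_mem_of_mul_eq_one C_mem (by
    ext i j; fin_cases i <;> fin_cases j <;> simp only [Matrix.SpecialLinearGroup.coe_mul] <;>
      simp [sunMonodromy9, Ci, Matrix.mul_apply, Fin.sum_univ_succ])

lemma Di_mem : Di ∈ H :=
  inv_mem_of_mul_eq_one D_mem (by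
    ext i j; fin_cases i <;> fin_cases j <;> simp only [Matrix.SpecialLinearGroup.coe_mul] <;>
      simp [D, Di, Matrix.mul_apply, Fin.sum_univ_succ])

lemma Ei_mem : Ei ∈ H :=
  inv_mem_of_mul_eq_one E_mem (by
    ext i j; fin_cases i <;> fin_cases j <;> simp only [Matrix.SpecialLinearGroup.coe_mul] <;>
      simp [E, Ei, Matrix.mul_apply, Fin.sum_univ_succ])

lemma Fi_mem : Fi ∈ H :=
  inv_mem_of_mul_eq_one F_mem (by
    ext i j; fin_cases i <;> fin_cases j <;> simp only [Matrix.SpecialLinearGroup.coe_mul] <;>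
      simp [F, Fi, Matrix.mul_apply, Fin.sum_univ_succ])

/-- The easy inclusion: the monodromy group is contained in `Γ₁(6)`. -/
lemma H_le_Gamma1 : H ≤ CongruenceSubgroup.Gamma1 6 := by
  rw [Subgroup.closure_le]
  rintro M (rfl | rfl | rfl) <;>
  · rw [SetLike.mem_coe, CongruenceSubgroup.Gamma1_mem]
    refine ⟨?_, ?_, ?_⟩ <;>
    · simp only [sunMonodromy0, sunMonodromy1, sunMonodromy9]
      decide

/-- Sign-choice helper: a parabolic move in one of the two directions strictly
decreases the relevant quadratic quantity. -/
lemma dec_helper (X Y α β : ℤ) (hX : X ≠ 0) (h : β * |X| < α * |Y|) :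
    ∃ n : ℤ, (n = 1 ∨ n = -1) ∧ α * (n * (X * Y)) + β * X ^ 2 < 0 := by
  have hXpos : 0 < |X| := abs_pos.mpr hX
  have key : β * X ^ 2 < α * |X * Y| := by
    have h2 := mul_lt_mul_of_pos_right h hXpos
    have e1 : β * |X| * |X| = β * X ^ 2 := by rw [mul_assoc, abs_mul_abs_self]; ring
    have e2 : α * |Y| * |X| = α * |X * Y| := by rw [mul_assoc, ← abs_mul, mul_comm Y X]
    linarith [e1 ▸ e2 ▸ h2]
  rcases le_or_gt (X * Y) 0 with h1 | h1
  · exact ⟨1, Or.inl rfl, by rw [abs_of_nonpos h1] at key; linarith⟩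
  · exact ⟨-1, Or.inr rfl, by rw [abs_of_pos h1] at key; linarith⟩

/-- First column of a product. -/
lemma mul_col (M γ : SL(2, ℤ)) :
    (M * γ) 0 0 = M 0 0 * γ 0 0 + M 0 1 * γ 1 0 ∧
    (M * γ) 1 0 = M 1 0 * γ 0 0 + M 1 1 * γ 1 0 := by
  constructor <;>
    simp [Matrix.SpecialLinearGroup.coe_mul, Matrix.mul_apply, Fin.sum_univ_succ]

/-- The coverage lemma: for a first column of an element of `Γ₁(6)`, at least one
of the six parabolic moves strictly reduces the sum of squares. -/
lemma coverage (a c : ℤ) (ha : (6:ℤ) ∣ a - 1) (hc : (6:ℤ) ∣ c) :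
    (1 * c.natAbs < 2 * a.natAbs) ∨
    (36 * a.natAbs < 12 * c.natAbs) ∨
    (2*a - c ≠ 0 ∧ 45 * (2*a - c).natAbs < 6 * (a + 2*c).natAbs) ∨
    (3*a - c ≠ 0 ∧ 40 * (3*a - c).natAbs < 4 * (a + 3*c).natAbs) ∨
    (3*a + c ≠ 0 ∧ 40 * (3*a + c).natAbs < 4 * (a - 3*c).natAbs) ∨
    (2*a + c ≠ 0 ∧ 45 * (2*a + c).natAbs < 6 * (a - 2*c).natAbs) := by
  omega

lemma natAbs_to_abs {m k : ℕ} {X Y : ℤ} (h : m * X.natAbs < k * Y.natAbs) :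
    (m : ℤ) * |X| < (k : ℤ) * |Y| := by
  rw [Int.abs_eq_natAbs, Int.abs_eq_natAbs]
  exact_mod_cast h

lemma toNat_step {x y : ℤ} {n : ℕ} (h : x < y) (h2 : y.toNat ≤ n) (hy : 0 < y) :
    x.toNat < n := by omega

/-- Go from `M * γ ∈ H` to `γ ∈ H`. -/
lemma step {γ M : SL(2, ℤ)} (hM : M ∈ H) (h : M * γ ∈ H) : γ ∈ H := by
  have := mul_mem (inv_mem hM) h
  rwa [inv_mul_cancel_left] at this

/-- One descent move: multiply on the left by `M ∈ H` so that the sum of squares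
of the first column strictly decreases, then use the inductive hypothesis. -/
lemma move (γ M : SL(2, ℤ)) (p q r s : ℤ) {n : ℕ}
    (hM : M ∈ H)
    (hMe : M 0 0 = p ∧ M 0 1 = q ∧ M 1 0 = r ∧ M 1 1 = s)
    (hγ : γ ∈ CongruenceSubgroup.Gamma1 6)
    (ih : ∀ m, m < n → ∀ δ : SL(2, ℤ), δ ∈ CongruenceSubgroup.Gamma1 6 →
      ((δ 0 0) ^ 2 + (δ 1 0) ^ 2).toNat ≤ m → δ ∈ H)
    (hlt : (p * γ 0 0 + q * γ 1 0) ^ 2 + (r * γ 0 0 + s * γ 1 0) ^ 2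
            < (γ 0 0) ^ 2 + (γ 1 0) ^ 2)
    (hn : ((γ 0 0) ^ 2 + (γ 1 0) ^ 2).toNat ≤ n) : γ ∈ H := by
  obtain ⟨e0, e1⟩ := mul_col M γ
  obtain ⟨hp, hq, hr, hs⟩ := hMe
  rw [hp, hq] at e0
  rw [hr, hs] at e1
  apply step hM
  refine ih (((M * γ) 0 0) ^ 2 + ((M * γ) 1 0) ^ 2).toNat ?_ _
    (mul_mem (H_le_Gamma1 hM) hγ) le_rfl
  rw [e0, e1]
  refine toNat_step hlt hn ?_
  nlinarith [sq_nonneg (γ 0 0), sq_nonneg (γ 1 0), sq_nonneg (p * γ 0 0 + q * γ 1 0),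
    sq_nonneg (r * γ 0 0 + s * γ 1 0)]

/-- The descent: every element of `Γ₁(6)` lies in the monodromy group. -/
lemma descent : ∀ (n : ℕ) (γ : SL(2, ℤ)), γ ∈ CongruenceSubgroup.Gamma1 6 →
    ((γ 0 0) ^ 2 + (γ 1 0) ^ 2).toNat ≤ n → γ ∈ H := by
  intro n
  induction n using Nat.strong_induction_on with
  | _ n ih =>
    intro γ hγ hn
    obtain ⟨h1, -, h3⟩ := (CongruenceSubgroup.Gamma1_mem 6 γ).mp hγ
    set a := γ 0 0 with ha_def
    set c := γ 1 0 with hc_def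
    have ha : (6:ℤ) ∣ a - 1 := by
      have h' : ((a - 1 : ℤ) : ZMod 6) = 0 := by push_cast; rw [h1]; ring
      exact_mod_cast (ZMod.intCast_zmod_eq_zero_iff_dvd _ 6).mp h'
    have hc : (6:ℤ) ∣ c := by
      exact_mod_cast (ZMod.intCast_zmod_eq_zero_iff_dvd _ 6).mp h3
    by_cases hc0 : c = 0
    · -- base case: upper triangular, hence a power of `T = sunMonodromy0`
      have hdet := γ.2
      rw [Matrix.det_fin_two] at hdet
      change (γ : Matrix (Fin 2) (Fin 2) ℤ) 1 0 = 0 at hc0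
      rw [hc0, mul_zero, sub_zero] at hdet
      have had : a * γ 1 1 = 1 := hdet
      have ha1 : a = 1 := by
        rcases Int.isUnit_iff.mp (IsUnit.of_mul_eq_one _ had) with h | h
        · exact h
        · omega
      have hd1 : γ 1 1 = 1 := by rw [ha1, one_mul] at had; exact had
      have hγT : γ = sunMonodromy0 ^ (γ 0 1) := by
        have hTA : sunMonodromy0 = ModularGroup.T := Subtype.ext rfl
        rw [hTA]
        apply Subtype.ext
        rw [ModularGroup.coe_T_zpow]
        conv_lhs => rw [Matrix.eta_fin_two (γ : Matrix (Fin 2) (Fin 2) ℤ)]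
        rw [show (γ : Matrix (Fin 2) (Fin 2) ℤ) 0 0 = 1 from ha1,
          show (γ : Matrix (Fin 2) (Fin 2) ℤ) 1 0 = 0 from hc0,
          show (γ : Matrix (Fin 2) (Fin 2) ℤ) 1 1 = 1 from hd1]
      rw [hγT]
      exact zpow_mem A_mem _
    · -- inductive step: apply one of the six parabolic moves
      rcases coverage a c ha hc with hcov | hcov | ⟨hne, hcov⟩ | ⟨hne, hcov⟩ |
        ⟨hne, hcov⟩ | ⟨hne, hcov⟩
      · -- move A^{±1}
        obtain ⟨m, hm, hdec⟩ := dec_helper c a 2 1 hc0 (natAbs_to_abs hcov)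
        rcases hm with rfl | rfl
        · exact move γ A 1 1 0 1 A_mem ⟨by decide, by decide, by decide, by decide⟩ hγ ih
            (by nlinarith [hdec]) hn
        · exact move γ Ai 1 (-1) 0 1 Ai_mem ⟨by decide, by decide, by decide, by decide⟩ hγ ih
            (by nlinarith [hdec]) hn
      · -- move B^{∓1}
        have ha0 : a ≠ 0 := by intro h; rw [h] at ha; omega
        obtain ⟨m, hm, hdec⟩ := dec_helper a c 12 36 ha0 (natAbs_to_abs hcov)
        rcases hm with rfl | rfl
        · exact move γ Bi 1 0 6 1 Bi_mem ⟨by decide, by decide, by decide, by decide⟩ hγ ih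
            (by nlinarith [hdec]) hn
        · exact move γ B 1 0 (-6) 1 B_mem ⟨by decide, by decide, by decide, by decide⟩ hγ ih
            (by nlinarith [hdec]) hn
      · -- move E^{±1}
        obtain ⟨m, hm, hdec⟩ := dec_helper (2*a - c) (a + 2*c) 6 45 hne (natAbs_to_abs hcov)
        rcases hm with rfl | rfl
        · exact move γ E 7 (-3) 12 (-5) E_mem ⟨by decide, by decide, by decide, by decide⟩ hγ ih
            (by nlinarith [hdec]) hn
        · exact move γ Ei (-5) 3 (-12) 7 Ei_mem ⟨by decide, by decide, by decide, by decide⟩ hγ ih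
            (by nlinarith [hdec]) hn
      · -- move F^{±1}
        obtain ⟨m, hm, hdec⟩ := dec_helper (3*a - c) (a + 3*c) 4 40 hne (natAbs_to_abs hcov)
        rcases hm with rfl | rfl
        · exact move γ F 7 (-2) 18 (-5) F_mem ⟨by decide, by decide, by decide, by decide⟩ hγ ih
            (by nlinarith [hdec]) hn
        · exact move γ Fi (-5) 2 (-18) 7 Fi_mem ⟨by decide, by decide, by decide, by decide⟩ hγ ih
            (by nlinarith [hdec]) hn
      · -- move C^{±1}
        obtain ⟨m, hm, hdec⟩ := dec_helper (3*a + c) (a - 3*c) 4 40 hne (natAbs_to_abs hcov)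
        rcases hm with rfl | rfl
        · exact move γ C 7 2 (-18) (-5) C_mem ⟨by decide, by decide, by decide, by decide⟩ hγ ih
            (by nlinarith [hdec]) hn
        · exact move γ Ci (-5) (-2) 18 7 Ci_mem ⟨by decide, by decide, by decide, by decide⟩ hγ ih
            (by nlinarith [hdec]) hn
      · -- move D^{±1}
        obtain ⟨m, hm, hdec⟩ := dec_helper (2*a + c) (a - 2*c) 6 45 hne (natAbs_to_abs hcov)
        rcases hm with rfl | rfl
        · exact move γ D 7 3 (-12) (-5) D_mem ⟨by decide, by decide, by decide, by decide⟩ hγ ih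
            (by nlinarith [hdec]) hn
        · exact move γ Di (-5) (-3) 12 7 Di_mem ⟨by decide, by decide, by decide, by decide⟩ hγ ih
            (by nlinarith [hdec]) hn

end SunriseAux

/-- The subgroup of `SL(2, ℤ)` generated by the monodromy matrices `[[1,1],[0,1]]`,
`[[1,0],[-6,1]]` and `[[7,2],[-18,-5]]` of the two-loop equal-mass sunrise differential
operator is the congruence subgroup `Γ₁(6)`. -/
theorem sunrise_monodromy_group_eq_Gamma1_six :
    Subgroup.closure {sunMonodromy0, sunMonodromy1, sunMonodromy9} =
      CongruenceSubgroup.Gamma1 6 := by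
  apply le_antisymm SunriseAux.H_le_Gamma1
  intro γ hγ
  exact SunriseAux.descent _ γ hγ le_rfl
end

section
/- Let r ≥ 1 be an integer and let a, b, a', b' be complex numbers. Define the r×r complex matrix W by W_{ij} = C(r−1, i−1)^{−1} · Σ_k C(r−j, i−k−1)·C(j−1, k)·a^{r−i−j+k+1}·b^{j−k−1}·(a')^{i−k−1}·(b')^{k} for 1 ≤ i, j ≤ r, where the sum runs over integers k with max(0, i+j−r−1) ≤ k ≤ min(i−1, j−1) (so all exponents are nonnegative) and C(n, m) denotes the binomial coefficient. Then det W = (a·b' − b·a')^{r(r−1)/2} · Π_{k=1}^{r−1} (k!/k^k). (Applied to a = ψ₁(x), b = ψ₂(x), a' = ψ₁'(x), b' = ψ₂'(x), this is the determinant of the normalized Wronskian matrix W_r(x) of the (r−1)-th symmetric power of a second-order operator with solutions ψ₁, ψ₂: det W_r(x) = D(x)^{r(r−1)/2}·Π_{k=1}^{r−1} k!/k^k, where D = ψ₁ψ₂' − ψ₂ψ₁'.) -/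
noncomputable section

section SymPowAuxSection
open Finset MvPolynomial
def ecoefR {S : Type*} [CommSemiring S] (p q : ℕ) (a b a' b' : S) (i : ℕ) : S :=
  ∑ k ∈ range (i+1),
    ((p.choose (i - k) * q.choose k : ℕ) : S) * a ^ (p - (i - k)) * a' ^ (i - k)
      * b ^ (q - k) * b' ^ k


lemma sum_sum_shift {M : Type*} [AddCommMonoid M] (P Q : ℕ) (f : ℕ → ℕ → M)
    (hf : ∀ s k, P < s ∨ Q < k → f s k = 0) :
    ∑ s ∈ range (P+1), ∑ k ∈ range (Q+1), f s k
      = ∑ i ∈ range (P+Q+1), ∑ k ∈ range (i+1), f (i-k) k := by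
  rw [Finset.sum_sigma', Finset.sum_sigma']
  refine Finset.sum_bij_ne_zero (fun x _ _ => ⟨x.1 + x.2, x.2⟩) ?_ ?_ ?_ ?_
  · rintro ⟨s, k⟩ h hne
    simp only [mem_sigma, mem_range] at h ⊢
    have : ¬ (P < s ∨ Q < k) := fun hc => hne (hf s k hc)
    push_neg at this
    omega
  · rintro ⟨s₁, k₁⟩ h₁ hn₁ ⟨s₂, k₂⟩ h₂ hn₂ he
    simp only [Sigma.mk.inj_iff, heq_eq_eq] at he
    obtain ⟨h1, h2⟩ := he
    simp only [Sigma.mk.inj_iff, heq_eq_eq]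
    exact ⟨by omega, by omega⟩
  · rintro ⟨i, k⟩ h hne
    simp only [mem_sigma, mem_range] at h
    have hk : k ≤ i := by omega
    have : ¬ (P < i - k ∨ Q < k) := fun hc => hne (hf _ _ hc)
    push_neg at this
    refine ⟨⟨i - k, k⟩, ?_, ?_, ?_⟩
    · simp only [mem_sigma, mem_range]; omega
    · simpa using hne
    · simp only [Sigma.mk.inj_iff, heq_eq_eq]; exact ⟨by omega, trivial⟩
  · rintro ⟨s, k⟩ h hne
    simp only
    congr 1
    omega


lemma expand (p q : ℕ) (a b a' b' : ℂ) :
    (C a * X 0 + C a' * X 1) ^ p * (C b * X 0 + C b' * X 1) ^ q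
      = ∑ i ∈ range (p + q + 1),
          C (ecoefR p q a b a' b' i) * (X 0 ^ (p + q - i) * X 1 ^ i : MvPolynomial (Fin 2) ℂ) := by
  have h1 : (C a * X 0 + C a' * X 1 : MvPolynomial (Fin 2) ℂ) ^ p
      = ∑ s ∈ range (p+1), (C a' * X 1) ^ s * (C a * X 0) ^ (p - s)
          * ((p.choose s : ℕ) : MvPolynomial (Fin 2) ℂ) := by
    rw [add_comm]; exact add_pow _ _ p
  have h2 : (C b * X 0 + C b' * X 1 : MvPolynomial (Fin 2) ℂ) ^ q
      = ∑ k ∈ range (q+1), (C b' * X 1) ^ k * (C b * X 0) ^ (q - k)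
          * ((q.choose k : ℕ) : MvPolynomial (Fin 2) ℂ) := by
    rw [add_comm]; exact add_pow _ _ q
  rw [h1, h2, Finset.sum_mul_sum]
  have key : ∀ s ∈ range (p+1), ∀ k ∈ range (q+1),
      ((C a' * X 1) ^ s * (C a * X 0) ^ (p - s) * ((p.choose s : ℕ) : MvPolynomial (Fin 2) ℂ)) *
        ((C b' * X 1) ^ k * (C b * X 0) ^ (q - k) * ((q.choose k : ℕ) : MvPolynomial (Fin 2) ℂ))
      = C (((p.choose s * q.choose k : ℕ) : ℂ) * a ^ (p - s) * a' ^ s * b ^ (q - k) * b' ^ k)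
          * (X 0 ^ (p + q - (s + k)) * X 1 ^ (s + k) : MvPolynomial (Fin 2) ℂ) := by
    intro s hs k hk
    simp only [mem_range] at hs hk
    have hX : (X 0 : MvPolynomial (Fin 2) ℂ) ^ (p - s) * X 0 ^ (q - k)
        = X 0 ^ (p + q - (s + k)) := by rw [← pow_add]; congr 1; omega
    rw [← hX]
    simp only [map_mul, map_pow, map_natCast, mul_pow]
    push_cast
    ring
  rw [Finset.sum_congr rfl (fun s hs => Finset.sum_congr rfl (fun k hk => key s hs k hk))]
  rw [sum_sum_shift p q
    (fun s k => C (((p.choose s * q.choose k : ℕ) : ℂ) * a ^ (p - s) * a' ^ s * b ^ (q - k) * b' ^ k)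
          * (X 0 ^ (p + q - (s + k)) * X 1 ^ (s + k) : MvPolynomial (Fin 2) ℂ))
    (by
      intro s k h
      rcases h with h | h
      · simp [Nat.choose_eq_zero_of_lt h]
      · simp [Nat.choose_eq_zero_of_lt h])]
  refine Finset.sum_congr rfl (fun i hi => ?_)
  rw [ecoefR, map_sum, Finset.sum_mul]
  refine Finset.sum_congr rfl (fun k hk => ?_)
  simp only [mem_range] at hk
  have h1 : i - k + k = i := by omega
  rw [h1]

namespace SymPowAux
open Finset MvPolynomial


variable (d : ℕ)

def mon (i : Fin (d+1)) : MvPolynomial (Fin 2) ℂ := X 0 ^ (d - i.1) * X 1 ^ i.1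

def nu (i : Fin (d+1)) : Fin 2 →₀ ℕ := Finsupp.single 0 (d - i.1) + Finsupp.single 1 i.1

lemma mon_eq (i : Fin (d+1)) : mon d i = monomial (nu d i) 1 := by
  rw [mon, nu, X_pow_eq_monomial, X_pow_eq_monomial, monomial_mul, one_mul]

lemma nu_inj : Function.Injective (nu d) := by
  intro i j h
  have h1 : (nu d i) 1 = (nu d j) 1 := by rw [h]
  simp only [nu, Finsupp.add_apply, Finsupp.single_apply] at h1
  simp only [show ((0:Fin 2) = 1) = False by simp, if_false, if_true, zero_add] at h1
  exact Fin.ext h1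

lemma mon_li : LinearIndependent ℂ (mon d) := by
  have : mon d = (fun s => monomial s (1:ℂ)) ∘ (nu d) := by
    funext i; rw [mon_eq]; rfl
  rw [this, ← MvPolynomial.coe_basisMonomials]
  exact (MvPolynomial.basisMonomials (Fin 2) ℂ).linearIndependent.comp (nu d) (nu_inj d)

def V : Submodule ℂ (MvPolynomial (Fin 2) ℂ) := Submodule.span ℂ (Set.range (mon d))

def B : Module.Basis (Fin (d+1)) ℂ (V d) := Module.Basis.span (mon_li d)

variable (a b a' b' : ℂ)

def gv : Fin 2 → MvPolynomial (Fin 2) ℂ := ![C a * X 0 + C a' * X 1, C b * X 0 + C b' * X 1]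

def sig : MvPolynomial (Fin 2) ℂ →ₐ[ℂ] MvPolynomial (Fin 2) ℂ := aeval (gv a b a' b')

lemma sig_mon (j : Fin (d+1)) :
    sig a b a' b' (mon d j)
      = ∑ i : Fin (d+1), ecoefR (d - j.1) j.1 a b a' b' i.1 • mon d i := by
  have hj : (d - j.1) + j.1 = d := by omega
  have : sig a b a' b' (mon d j)
      = (C a * X 0 + C a' * X 1) ^ (d - j.1) * (C b * X 0 + C b' * X 1) ^ j.1 := by
    rw [mon, sig, map_mul, map_pow, map_pow, aeval_X, aeval_X]
    rfl
  rw [this, expand, hj]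
  rw [← Fin.sum_univ_eq_sum_range (fun i => C (ecoefR (d - j.1) j.1 a b a' b' i)
    * (X 0 ^ (d - i) * X 1 ^ i : MvPolynomial (Fin 2) ℂ)) (d+1)]
  refine Finset.sum_congr rfl (fun i _ => ?_)
  rw [mon, smul_eq_C_mul]

lemma sig_mem (x : MvPolynomial (Fin 2) ℂ) (hx : x ∈ V d) : sig a b a' b' x ∈ V d := by
  have hle : V d ≤ Submodule.comap (sig a b a' b').toLinearMap (V d) := by
    rw [V, Submodule.span_le]
    rintro - ⟨j, rfl⟩
    simp only [SetLike.mem_coe, Submodule.mem_comap, AlgHom.toLinearMap_apply]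
    rw [sig_mon]
    exact Submodule.sum_mem _ (fun i _ => Submodule.smul_mem _ _
      (Submodule.subset_span ⟨i, rfl⟩))
  exact hle hx

def T : V d →ₗ[ℂ] V d := LinearMap.restrict (sig a b a' b').toLinearMap (sig_mem d a b a' b')

lemma B_coe (i : Fin (d+1)) : ((B d) i : MvPolynomial (Fin 2) ℂ) = mon d i := by
  rw [B]; exact congrArg Subtype.val (Module.Basis.span_apply (mon_li d) i)

def Emat (d : ℕ) {S : Type*} [CommSemiring S] (a b a' b' : S) :
    Matrix (Fin (d+1)) (Fin (d+1)) S :=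
  Matrix.of fun i j => ecoefR (d - j.1) j.1 a b a' b' i.1

lemma toMatrix_T : LinearMap.toMatrix (B d) (B d) (T d a b a' b') = Emat d a b a' b' := by
  ext i j
  rw [LinearMap.toMatrix_apply]
  have hTBj : T d a b a' b' (B d j) = ∑ i : Fin (d+1),
      ecoefR (d - j.1) j.1 a b a' b' i.1 • B d i := by
    apply Subtype.ext
    push_cast [T, LinearMap.restrict_apply]
    simp only [B_coe]
    show sig a b a' b' ((B d j : MvPolynomial (Fin 2) ℂ)) = _
    rw [B_coe]
    exact sig_mon d a b a' b' j
  rw [hTBj, Module.Basis.repr_sum_self]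
  rfl


lemma sig_comp (a b a' b' p q p' q' : ℂ) :
    (sig a b a' b').comp (sig p q p' q')
      = sig (p*a + p'*b) (q*a + q'*b) (p*a' + p'*b') (q*a' + q'*b') := by
  apply MvPolynomial.algHom_ext
  intro i
  fin_cases i <;>
    · simp [sig, gv]
      ring


lemma T_comp (a b a' b' p q p' q' : ℂ) :
    T d (p*a + p'*b) (q*a + q'*b) (p*a' + p'*b') (q*a' + q'*b')
      = (T d a b a' b').comp (T d p q p' q') := by
  apply LinearMap.ext
  rintro ⟨x, hx⟩
  apply Subtype.ext
  simp only [T, LinearMap.comp_apply, LinearMap.restrict_apply, AlgHom.toLinearMap_apply]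
  exact (DFunLike.congr_fun (sig_comp a b a' b' p q p' q') x).symm


lemma toMatrix_T_det_mul (a b a' b' p q p' q' : ℂ) :
    (Emat d (p*a + p'*b) (q*a + q'*b) (p*a' + p'*b') (q*a' + q'*b')).det
      = (Emat d a b a' b').det * (Emat d p q p' q').det := by
  rw [← toMatrix_T, ← toMatrix_T, ← toMatrix_T, T_comp,
    LinearMap.toMatrix_comp (B d) (B d) (B d), Matrix.det_mul]


variable (d : ℕ)
lemma sum_fin_id : ∑ i : Fin (d+1), i.1 = (d+1)*d/2 := by
  rw [Fin.sum_univ_eq_sum_range (fun i => i) (d+1), Finset.sum_range_id]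
  simp

lemma sum_fin_rev : ∑ i : Fin (d+1), (d - i.1) = (d+1)*d/2 := by
  rw [Fin.sum_univ_eq_sum_range (fun i => d - i) (d+1)]
  have := Finset.sum_range_reflect (fun i => i) (d+1)
  simp only [add_tsub_cancel_right] at this
  rw [this, Finset.sum_range_id]
  simp

lemma det_lower (a a' b' : ℂ) :
    (Emat d a (0:ℂ) a' b').det = (a * b') ^ ((d+1)*d/2) := by
  have htri : (Emat d a (0:ℂ) a' b').BlockTriangular OrderDual.toDual := by
    intro i j hij
    have hij' : (i:ℕ) < j := hij
    show ecoefR (d - j.1) j.1 a 0 a' b' i.1 = 0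
    apply Finset.sum_eq_zero
    intro k hk
    simp only [mem_range] at hk
    have : (0:ℂ) ^ (j.1 - k) = 0 := zero_pow (by omega)
    rw [this]
    ring
  rw [Matrix.det_of_lowerTriangular _ htri]
  have hdiag : ∀ i : Fin (d+1), Emat d a (0:ℂ) a' b' i i = a ^ (d - i.1) * b' ^ i.1 := by
    intro i
    show ecoefR (d - i.1) i.1 a 0 a' b' i.1 = _
    rw [ecoefR, Finset.sum_eq_single_of_mem i.1 (Finset.self_mem_range_succ i.1)]
    · simp [Nat.choose_self]
    · intro k hk hne
      simp only [mem_range] at hk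
      have : (0:ℂ) ^ (i.1 - k) = 0 := zero_pow (by omega)
      rw [this]
      ring
  rw [Finset.prod_congr rfl (fun i _ => hdiag i), Finset.prod_mul_distrib,
    Finset.prod_pow_eq_pow_sum, Finset.prod_pow_eq_pow_sum, sum_fin_rev, sum_fin_id, mul_pow]

lemma det_upper (c : ℂ) :
    (Emat d (1:ℂ) c (0:ℂ) (1:ℂ)).det = 1 := by
  have htri : (Emat d (1:ℂ) c (0:ℂ) (1:ℂ)).BlockTriangular id := by
    intro i j hij
    have hij' : (j:ℕ) < i := hij
    show ecoefR (d - j.1) j.1 1 c 0 1 i.1 = 0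
    apply Finset.sum_eq_zero
    intro k hk
    simp only [mem_range] at hk
    rcases Nat.lt_or_ge k i.1 with h | h
    · have : (0:ℂ) ^ (i.1 - k) = 0 := zero_pow (by omega)
      rw [this]; ring
    · have hki : k = i.1 := by omega
      rw [hki, Nat.choose_eq_zero_of_lt hij']
      simp
  rw [Matrix.det_of_upperTriangular htri]
  have hdiag : ∀ i : Fin (d+1), Emat d (1:ℂ) c (0:ℂ) (1:ℂ) i i = 1 := by
    intro i
    show ecoefR (d - i.1) i.1 1 c 0 1 i.1 = _
    rw [ecoefR, Finset.sum_eq_single_of_mem i.1 (Finset.self_mem_range_succ i.1)]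
    · simp [Nat.choose_self]
    · intro k hk hne
      simp only [mem_range] at hk
      have : (0:ℂ) ^ (i.1 - k) = 0 := zero_pow (by omega)
      rw [this]; ring
  rw [Finset.prod_congr rfl (fun i _ => hdiag i), Finset.prod_const_one]

lemma det_Emat_ne (a b a' b' : ℂ) (ha : a ≠ 0) :
    (Emat d a b a' b').det = (a * b' - b * a') ^ ((d+1)*d/2) := by
  have h := toMatrix_T_det_mul d a 0 a' (b' - a' * b / a) 1 (b/a) 0 1
  have e1 : (1:ℂ)*a + 0*0 = a := by ring
  have e2 : (b/a)*a + 1*0 = b := by field_simp; ring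
  have e3 : (1:ℂ)*a' + 0*(b' - a' * b / a) = a' := by ring
  have e4 : (b/a)*a' + 1*(b' - a' * b / a) = b' := by field_simp; ring
  rw [e1, e2, e3, e4] at h
  rw [h, det_lower, det_upper, mul_one]
  congr 1
  field_simp

lemma mapE {S S' : Type*} [CommSemiring S] [CommSemiring S'] (f : S →+* S') (a b a' b' : S) :
    (Emat d a b a' b').map f = Emat d (f a) (f b) (f a') (f b') := by
  ext i j
  simp [Emat, ecoefR, map_sum, map_mul, map_pow, map_natCast]

lemma det_Emat (a b a' b' : ℂ) :
    (Emat d a b a' b').det = (a * b' - b * a') ^ ((d+1)*d/2) := by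
  set P : Polynomial ℂ :=
    (Emat d (Polynomial.X) (Polynomial.C b) (Polynomial.C a') (Polynomial.C b')).det with hP
  set Q : Polynomial ℂ :=
    (Polynomial.X * Polynomial.C b' - Polynomial.C b * Polynomial.C a') ^ ((d+1)*d/2) with hQ
  have heval : ∀ t : ℂ, Polynomial.eval t P = (Emat d t b a' b').det := by
    intro t
    rw [hP, ← Polynomial.coe_evalRingHom, RingHom.map_det]
    congr 1
    rw [RingHom.mapMatrix_apply, mapE]
    simp
  have hevalQ : ∀ t : ℂ, Polynomial.eval t Q = (t * b' - b * a') ^ ((d+1)*d/2) := by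
    intro t; simp [hQ]; ring
  have hPQ : P = Q := by
    apply Polynomial.eq_of_infinite_eval_eq
    apply Set.Infinite.mono (s := {(0:ℂ)}ᶜ)
    · intro t ht
      simp only [Set.mem_compl_iff, Set.mem_singleton_iff] at ht
      simp only [Set.mem_setOf_eq]
      rw [heval, hevalQ, det_Emat_ne d t b a' b' ht]
    · exact Set.Finite.infinite_compl (Set.finite_singleton 0)
  have := heval a
  rw [hPQ, hevalQ] at this
  exact this.symm


end SymPowAux
lemma Pstep (d : ℕ) :
    (∏ i ∈ range (d+2), (d+1).choose i) * (d+1).factorial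
      = (∏ i ∈ range (d+1), d.choose i) * (d+1)^(d+1) := by
  have h1 : ∏ i ∈ range (d+2), (d+1).choose i
      = ∏ i ∈ range (d+1), (d+1).choose (i+1) := by
    rw [Finset.prod_range_succ' (fun i => (d+1).choose i) (d+1)]
    simp
  rw [h1, ← Finset.prod_range_add_one_eq_factorial, ← Finset.prod_mul_distrib]
  have h2 : ∀ i ∈ range (d+1), (d+1).choose (i+1) * (i+1) = (d+1) * d.choose i := by
    intro i _
    exact (Nat.add_one_mul_choose_eq d i).symm
  rw [Finset.prod_congr rfl h2, Finset.prod_mul_distrib, Finset.prod_const, Finset.card_range,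
    mul_comm]

lemma PFG (d : ℕ) :
    (∏ i ∈ range (d+1), d.choose i) * (∏ k ∈ range d, (k+1).factorial)
      = ∏ k ∈ range d, (k+1)^(k+1) := by
  induction d with
  | zero => simp
  | succ d ih =>
    rw [Finset.prod_range_succ (fun k => (k+1).factorial) d,
      Finset.prod_range_succ (fun k => (k+1)^(k+1)) d]
    have := Pstep d
    calc (∏ i ∈ range (d+2), (d+1).choose i) *
          ((∏ k ∈ range d, (k+1).factorial) * (d+1).factorial)
        = ((∏ i ∈ range (d+2), (d+1).choose i) * (d+1).factorial) *
            (∏ k ∈ range d, (k+1).factorial) := by ring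
      _ = ((∏ i ∈ range (d+1), d.choose i) * (d+1)^(d+1)) *
            (∏ k ∈ range d, (k+1).factorial) := by rw [this]
      _ = ((∏ i ∈ range (d+1), d.choose i) * (∏ k ∈ range d, (k+1).factorial))
            * (d+1)^(d+1) := by ring
      _ = (∏ k ∈ range d, (k+1)^(k+1)) * (d+1)^(d+1) := by rw [ih]

set_option maxHeartbeats 400000 in

set_option maxHeartbeats 400000 in
lemma inv_choose_prod (d : ℕ) :
    ∏ i : Fin (d+1), ((d.choose i.1 : ℂ))⁻¹
      = ∏ k ∈ Icc 1 d, ((Nat.factorial k : ℂ) / (k : ℂ) ^ k) := by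
  have hIcc : ∀ (f : ℕ → ℂ), ∏ k ∈ Icc 1 d, f k = ∏ k ∈ range d, f (k+1) := by
    intro f
    rw [Finset.range_eq_Ico, Finset.prod_Ico_eq_prod_range]
    have : Icc 1 d = Ico 1 (d+1) := by rw [Finset.Ico_add_one_right_eq_Icc]
    rw [this, Finset.prod_Ico_eq_prod_range]
    simp [add_comm]
  rw [hIcc]
  have hP : ∏ i : Fin (d+1), ((d.choose i.1 : ℂ)) = ((∏ i ∈ range (d+1), d.choose i : ℕ) : ℂ) := by
    rw [Fin.prod_univ_eq_prod_range (fun i => ((d.choose i : ℕ) : ℂ)) (d+1)]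
    push_cast
    rfl
  rw [Finset.prod_inv_distrib, hP, Finset.prod_div_distrib]
  have hF : ∏ k ∈ range d, (((k+1).factorial : ℕ) : ℂ)
      = ((∏ k ∈ range d, (k+1).factorial : ℕ) : ℂ) := by push_cast; rfl
  have hG : ∏ k ∈ range d, (((k+1) : ℕ) : ℂ)^(k+1)
      = ((∏ k ∈ range d, (k+1)^(k+1) : ℕ) : ℂ) := by push_cast; rfl
  rw [hF, hG]
  have hPn : (∏ i ∈ range (d+1), d.choose i) ≠ 0 := by
    apply Finset.prod_ne_zero_iff.mpr
    intro i hi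
    exact (Nat.choose_pos (Nat.lt_succ_iff.mp (Finset.mem_range.mp hi))).ne'
  have hGn : (∏ k ∈ range d, (k+1)^(k+1)) ≠ 0 := by
    apply Finset.prod_ne_zero_iff.mpr
    intro k _
    positivity
  have hkey : ((∏ i ∈ range (d+1), d.choose i : ℕ) : ℂ)
        * ((∏ k ∈ range d, (k+1).factorial : ℕ) : ℂ)
      = ((∏ k ∈ range d, (k+1)^(k+1) : ℕ) : ℂ) := by
    exact_mod_cast congrArg (fun n : ℕ => (n : ℂ)) (PFG d)
  have hPc : ((∏ i ∈ range (d+1), d.choose i : ℕ) : ℂ) ≠ 0 := Nat.cast_ne_zero.mpr hPn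
  have hGc : ((∏ k ∈ range d, (k+1)^(k+1) : ℕ) : ℂ) ≠ 0 := Nat.cast_ne_zero.mpr hGn
  rw [eq_div_iff hGc, ← hkey, inv_mul_cancel_left₀ hPc]

end SymPowAuxSection


/-- The normalized Wronskian-type matrix of the `(r-1)`-th symmetric power of a
second-order operator, with `a, b` playing the role of the two solutions `ψ₁, ψ₂` and
`a', b'` that of their derivatives.  In the 1-based indexing `1 ≤ i, j ≤ r` of the
informal statement, `W_{ij} = C(r-1,i-1)⁻¹ Σ_k C(r-j,i-k-1) C(j-1,k)
a^{r-i-j+k+1} b^{j-k-1} (a')^{i-k-1} (b')^k`, the sum running over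
`max(0, i+j-r-1) ≤ k ≤ min(i-1, j-1)`. -/
def symPowWronskian (r : ℕ) (a b a' b' : ℂ) : Matrix (Fin r) (Fin r) ℂ :=
  Matrix.of fun i j =>
    (((r - 1).choose i.val : ℂ))⁻¹ *
      ∑ k ∈ Finset.Icc (i.val + j.val + 1 - r) (min i.val j.val),
        (((r - (j.val + 1)).choose (i.val - k) : ℕ) : ℂ) * ((j.val.choose k : ℕ) : ℂ) *
          a ^ (r + k - i.val - j.val - 1) * b ^ (j.val - k) * a' ^ (i.val - k) * b' ^ k

open Finset SymPowAux in
/-- The determinant of the normalized Wronskian matrix of the `(r-1)`-th symmetric power: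
`det W = (a·b' - b·a')^{r(r-1)/2} · Π_{k=1}^{r-1} k!/k^k`. -/
theorem symPowWronskian_det (r : ℕ) (hr : 1 ≤ r) (a b a' b' : ℂ) :
    (symPowWronskian r a b a' b').det =
      (a * b' - b * a') ^ (r * (r - 1) / 2) *
        ∏ k ∈ Finset.Icc 1 (r - 1), ((Nat.factorial k : ℂ) / (k : ℂ) ^ k) := by
  obtain ⟨d, rfl⟩ : ∃ d, r = d + 1 := ⟨r - 1, by omega⟩
  have hW : symPowWronskian (d+1) a b a' b'
      = Matrix.diagonal (fun i : Fin (d+1) => ((d.choose i.1 : ℂ))⁻¹) * Emat d a b a' b' := by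
    ext i j
    rw [Matrix.diagonal_mul]
    have hsum : ∑ k ∈ Finset.Icc (i.1 + j.1 + 1 - (d+1)) (min i.1 j.1),
          ((((d+1) - (j.val + 1)).choose (i.val - k) : ℕ) : ℂ) * ((j.val.choose k : ℕ) : ℂ) *
          a ^ ((d+1) + k - i.val - j.val - 1) * b ^ (j.val - k) * a' ^ (i.val - k) * b' ^ k
        = ecoefR (d - j.1) j.1 a b a' b' i.1 := by
      rw [ecoefR]
      have hsub : Finset.Icc (i.1 + j.1 + 1 - (d+1)) (min i.1 j.1) ⊆ range (i.1 + 1) := by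
        intro k hk
        simp only [Finset.mem_Icc, Finset.mem_range] at hk ⊢
        omega
      rw [← Finset.sum_subset hsub]
      · refine Finset.sum_congr rfl (fun k hk => ?_)
        simp only [Finset.mem_Icc] at hk
        have hkj : k ≤ j.1 := by omega
        have hki : k ≤ i.1 := by omega
        have hjd : j.1 ≤ d := by omega
        have he1 : (d+1) - (j.1 + 1) = d - j.1 := by omega
        have he2 : (d+1) + k - i.1 - j.1 - 1 = (d - j.1) - (i.1 - k) := by omega
        rw [he1, he2]
        push_cast
        ring
      · intro k hk hnk
        simp only [Finset.mem_range] at hk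
        simp only [Finset.mem_Icc, not_and_or, not_le] at hnk
        rcases hnk with h | h
        · have : d - j.1 < i.1 - k := by omega
          rw [Nat.choose_eq_zero_of_lt this]
          simp
        · have : j.1 < k := by omega
          rw [Nat.choose_eq_zero_of_lt this]
          simp
    show ((((d+1) - 1).choose i.val : ℂ))⁻¹ * _ = ((d.choose i.1 : ℂ))⁻¹ * ecoefR (d - j.1) j.1 a b a' b' i.1
    rw [hsum]
    norm_num
  rw [hW, Matrix.det_mul, Matrix.det_diagonal, det_Emat, inv_choose_prod]
  simp only [Nat.add_sub_cancel]
  rw [mul_comm]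


end
end
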